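/- In the harmonic algebra setting, for any a₁, a₂ ∈ 𝔷 and any positive integer q, S(a₁ a₂^q) = sum over i from 0 to q of (-1)^i * (a₂^i a₁ ∗ S(a₂^(q-i))), where S = S^1 and ∗ is the harmonic product. -/

import Mathlib

/-!
Write `L_a v = a v + a ∘ v`, so that `S(a w) = L_a S(w)` and `T_j := S(a₂^j) = L_{a₂}^j 1`.
The recursion for `∗` gives `(b u) ∗ L_a v = L_a ((b u) ∗ v) + b (u ∗ L_a v)` whenever `v` is a
combination of `1` and words. For `x(i, j) = a₂^i a₁ ∗ T_j` this is a Pascal-type recurrence,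
under which the alternating antidiagonal sums `R_q = ∑_{i+j=q} (-1)^i x(i, j)` satisfy
`R_{q+1} = a₁ T_{q+1} + a₂ ∘ R_q`. Since `∘` is commutative and associative,
`a₁ ∘ T_{q+1} = a₂ ∘ S(a₁ a₂^q)`, so `S(a₁ a₂^{q+1}) = a₁ T_{q+1} + a₁ ∘ T_{q+1}` obeys the same
recursion, and induction on `q` concludes.
-/

/-- The `i`-fold circle product `a₁ ∘ a₂ ∘ ⋯` of a nonempty list of elements
(`0` for the empty list, which is never used). -/
def circFold {Z : Type*} [Zero Z] (c : Z → Z → Z) : List Z → Z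
  | [] => 0
  | a :: t => t.foldl c a

/-- Iterated circle powers: `circPow c a i = a^{∘(i+1)}`. -/
def circPow {Z : Type*} (c : Z → Z → Z) (a : Z) : ℕ → Z
  | 0 => a
  | k + 1 => c (circPow c a k) a

open Finset

theorem Finset.Nat.sum_antidiagonal_succ_alternating {R M : Type*} [Ring R] [AddCommGroup M]
    [Module R M] (L A : M →ₗ[R] M) (t : ℕ → M) (x : ℕ × ℕ → M)
    (hcol : ∀ j, x (0, j + 1) = L (x (0, j)) + t (j + 1))
    (hrow : ∀ i, x (i + 1, 0) = A (x (i, 0)))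
    (hx : ∀ i j, x (i + 1, j + 1) = L (x (i + 1, j)) + A (x (i, j + 1))) (n : ℕ) :
    ∑ p ∈ antidiagonal (n + 1), (-1 : R) ^ p.1 • x p =
      (L - A) (∑ p ∈ antidiagonal n, (-1 : R) ^ p.1 • x p) + t (n + 1) := by
  set y : ℕ × ℕ → M := fun p => if p.1 = 0 then t p.2 else A (x (p.1 - 1, p.2)) with hy
  have hx0 : ∀ i, x (i + 1, 0) = y (i + 1, 0) := hrow
  have hxs : ∀ i j, x (i, j + 1) = L (x (i, j)) + y (i, j + 1) := by
    rintro (_ | i) j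
    exacts [hcol j, hx i j]
  calc ∑ p ∈ antidiagonal (n + 1), (-1 : R) ^ p.1 • x p
      = L (∑ p ∈ antidiagonal n, (-1 : R) ^ p.1 • x p) +
          ∑ p ∈ antidiagonal (n + 1), (-1 : R) ^ p.1 • y p := by
        rw [Nat.sum_antidiagonal_succ', Nat.sum_antidiagonal_succ', hx0]
        simp only [hxs, smul_add, sum_add_distrib, map_sum, map_smul]
        abel
    _ = _ := by
        rw [Nat.sum_antidiagonal_succ]
        simp only [hy, if_pos, Nat.add_sub_cancel, Nat.succ_ne_zero, if_false, pow_zero,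
          one_smul, pow_succ, mul_neg_one, neg_smul, sum_neg_distrib, map_sum, map_smul,
          LinearMap.sub_apply, smul_sub, sum_sub_distrib]
        abel

section HarmonicAlgebra

variable {Z H : Type*} [AddCommGroup Z] [Module ℚ Z] [Ring H] [Algebra ℚ H]

theorem circ_left_comm {circ : Z →ₗ[ℚ] Z →ₗ[ℚ] Z} (hcomm : ∀ a b : Z, circ a b = circ b a)
    (hassoc : ∀ a b c : Z, circ (circ a b) c = circ a (circ b c)) (a b c : Z) :
    circ a (circ b c) = circ b (circ a c) := by
  rw [← hassoc, hcomm a b, hassoc]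

/-- In the free algebra `𝔥¹` every element is of this form; in an abstract `H` the recursions for
`∗` and `a ∘ ·` only determine these maps on this subspace. -/
def letterSpan (ι : Z →ₗ[ℚ] H) : Submodule ℚ H :=
  Submodule.span ℚ (insert 1 {w | ∃ a v, w = ι a * v})

variable {ι : Z →ₗ[ℚ] H}

theorem one_mem_letterSpan : (1 : H) ∈ letterSpan ι :=
  Submodule.subset_span (Set.mem_insert _ _)

theorem mul_mem_letterSpan (a : Z) (v : H) : ι a * v ∈ letterSpan ι :=
  Submodule.subset_span (Set.mem_insert_of_mem _ ⟨a, v, rfl⟩)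

theorem LinearMap.eqOn_letterSpan {M : Type*} [AddCommGroup M] [Module ℚ M] {f g : H →ₗ[ℚ] M}
    (h_one : f 1 = g 1) (h_mul : ∀ a v, f (ι a * v) = g (ι a * v)) :
    Set.EqOn f g (letterSpan ι) := by
  refine LinearMap.eqOn_span' ?_
  rintro _ (rfl | ⟨a, v, rfl⟩)
  exacts [h_one, h_mul a v]

variable {circ : Z →ₗ[ℚ] Z →ₗ[ℚ] Z} {act : Z →ₗ[ℚ] H →ₗ[ℚ] H}

theorem act_mem_letterSpan (hact_one : ∀ a : Z, act a 1 = 0)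
    (hact_rec : ∀ (a b : Z) (w : H), act a (ι b * w) = ι (circ a b) * w)
    (a : Z) {v : H} (hv : v ∈ letterSpan ι) : act a v ∈ letterSpan ι := by
  suffices letterSpan ι ≤ (letterSpan ι).comap (act a) from this hv
  refine Submodule.span_le.2 ?_
  rintro _ (rfl | ⟨b, w, rfl⟩)
  · simp [hact_one]
  · simpa [hact_rec] using mul_mem_letterSpan (circ a b) w

theorem act_act_comm (hcomm : ∀ a b : Z, circ a b = circ b a)
    (hassoc : ∀ a b c : Z, circ (circ a b) c = circ a (circ b c))
    (hact_one : ∀ a : Z, act a 1 = 0)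
    (hact_rec : ∀ (a b : Z) (w : H), act a (ι b * w) = ι (circ a b) * w)
    (a b : Z) {v : H} (hv : v ∈ letterSpan ι) : act a (act b v) = act b (act a v) := by
  refine LinearMap.eqOn_letterSpan (f := (act a).comp (act b)) (g := (act b).comp (act a))
    ?_ (fun c w => ?_) hv
  · simp [hact_one]
  · simp [hact_rec, circ_left_comm hcomm hassoc a b c]

def letterStep (ι : Z →ₗ[ℚ] H) (act : Z →ₗ[ℚ] H →ₗ[ℚ] H) (a : Z) : H →ₗ[ℚ] H :=
  LinearMap.mulLeft ℚ (ι a) + act a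

theorem letterStep_apply (a : Z) (v : H) : letterStep ι act a v = ι a * v + act a v := rfl

theorem letterStep_sub_mulLeft (a : Z) : letterStep ι act a - LinearMap.mulLeft ℚ (ι a) = act a :=
  add_sub_cancel_left _ _

theorem astar_letterStep (hcomm : ∀ a b : Z, circ a b = circ b a)
    (hassoc : ∀ a b c : Z, circ (circ a b) c = circ a (circ b c))
    {astar : H →ₗ[ℚ] H →ₗ[ℚ] H} (hstar_one_right : ∀ w : H, astar w 1 = w)
    (hstar_rec : ∀ (a b : Z) (w₁ w₂ : H),
      astar (ι a * w₁) (ι b * w₂) =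
        ι a * astar w₁ (ι b * w₂) + ι b * astar (ι a * w₁) w₂ + ι (circ a b) * astar w₁ w₂)
    (hact_one : ∀ a : Z, act a 1 = 0)
    (hact_rec : ∀ (a b : Z) (w : H), act a (ι b * w) = ι (circ a b) * w)
    (a b : Z) (u : H) {v : H} (hv : v ∈ letterSpan ι) :
    astar (ι b * u) (letterStep ι act a v) =
      letterStep ι act a (astar (ι b * u) v) + ι b * astar u (letterStep ι act a v) := by
  refine LinearMap.eqOn_letterSpan
    (f := (astar (ι b * u)).comp (letterStep ι act a))
    (g := (letterStep ι act a).comp (astar (ι b * u)) +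
      (LinearMap.mulLeft ℚ (ι b)).comp ((astar u).comp (letterStep ι act a)))
    ?_ (fun c w => ?_) hv
  · have h := hstar_rec b a u 1
    simp only [mul_one, hstar_one_right] at h
    simp only [LinearMap.add_apply, LinearMap.comp_apply, LinearMap.mulLeft_apply,
      letterStep_apply, hact_one, add_zero, mul_one, hstar_one_right, h, hact_rec, hcomm b a]
    abel
  · simp only [LinearMap.add_apply, LinearMap.comp_apply, LinearMap.mulLeft_apply,
      letterStep_apply, hact_rec, map_add, hstar_rec, mul_add, hcomm b a,
      circ_left_comm hcomm hassoc b a c]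
    abel

variable {S : ℚ → H →ₗ[ℚ] H}

theorem S_one_mul
    (hS_rec : ∀ (r : ℚ) (a : Z) (w : H), S r (ι a * w) = ι a * S r w + r • act a (S r w))
    (a : Z) (w : H) : S 1 (ι a * w) = letterStep ι act a (S 1 w) := by
  rw [hS_rec, one_smul, letterStep_apply]

theorem S_pow_mem_letterSpan (hact_one : ∀ a : Z, act a 1 = 0)
    (hact_rec : ∀ (a b : Z) (w : H), act a (ι b * w) = ι (circ a b) * w)
    (hS_one : ∀ r : ℚ, S r 1 = 1)
    (hS_rec : ∀ (r : ℚ) (a : Z) (w : H), S r (ι a * w) = ι a * S r w + r • act a (S r w))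
    (r : ℚ) (a : Z) (m : ℕ) : S r (ι a ^ m) ∈ letterSpan ι := by
  induction m with
  | zero => simpa [hS_one] using one_mem_letterSpan
  | succ m ih =>
    rw [pow_succ', hS_rec]
    exact add_mem (mul_mem_letterSpan a _)
      (Submodule.smul_mem _ r (act_mem_letterSpan hact_one hact_rec a ih))

theorem act_S_mul_comm (hcomm : ∀ a b : Z, circ a b = circ b a)
    (hassoc : ∀ a b c : Z, circ (circ a b) c = circ a (circ b c))
    (hact_one : ∀ a : Z, act a 1 = 0)
    (hact_rec : ∀ (a b : Z) (w : H), act a (ι b * w) = ι (circ a b) * w)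
    (hS_rec : ∀ (r : ℚ) (a : Z) (w : H), S r (ι a * w) = ι a * S r w + r • act a (S r w))
    (r : ℚ) (a b : Z) {w : H} (hw : S r w ∈ letterSpan ι) :
    act a (S r (ι b * w)) = act b (S r (ι a * w)) := by
  rw [hS_rec, hS_rec, map_add, map_add, map_smul, map_smul, hact_rec, hact_rec, hcomm a b,
    act_act_comm hcomm hassoc hact_one hact_rec a b hw]

theorem S_one_mul_pow_eq_sum_antidiagonal (hcomm : ∀ a b : Z, circ a b = circ b a)
    (hassoc : ∀ a b c : Z, circ (circ a b) c = circ a (circ b c))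
    {astar : H →ₗ[ℚ] H →ₗ[ℚ] H}
    (hstar_one_left : ∀ w : H, astar 1 w = w)
    (hstar_one_right : ∀ w : H, astar w 1 = w)
    (hstar_rec : ∀ (a b : Z) (w₁ w₂ : H),
      astar (ι a * w₁) (ι b * w₂) =
        ι a * astar w₁ (ι b * w₂) + ι b * astar (ι a * w₁) w₂ + ι (circ a b) * astar w₁ w₂)
    (hact_one : ∀ a : Z, act a 1 = 0)
    (hact_rec : ∀ (a b : Z) (w : H), act a (ι b * w) = ι (circ a b) * w)
    (hS_one : ∀ r : ℚ, S r 1 = 1)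
    (hS_rec : ∀ (r : ℚ) (a : Z) (w : H), S r (ι a * w) = ι a * S r w + r • act a (S r w))
    (a₁ a₂ : Z) (q : ℕ) :
    S 1 (ι a₁ * ι a₂ ^ q) = ∑ p ∈ antidiagonal q,
      (-1 : ℚ) ^ p.1 • astar (ι a₂ ^ p.1 * ι a₁) (S 1 (ι a₂ ^ p.2)) := by
  have hmem := S_pow_mem_letterSpan hact_one hact_rec hS_one hS_rec 1 a₂
  have hstep (b : Z) (u : H) (j : ℕ) :
      astar (ι b * u) (S 1 (ι a₂ ^ (j + 1))) =
        letterStep ι act a₂ (astar (ι b * u) (S 1 (ι a₂ ^ j))) +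
          ι b * astar u (S 1 (ι a₂ ^ (j + 1))) := by
    rw [pow_succ', S_one_mul hS_rec]
    exact astar_letterStep hcomm hassoc hstar_one_right hstar_rec hact_one hact_rec a₂ b u (hmem j)
  induction q with
  | zero => simpa [hS_one, hstar_one_right, letterStep_apply, hact_one] using S_one_mul hS_rec a₁ 1
  | succ q ih =>
    rw [Finset.Nat.sum_antidiagonal_succ_alternating (letterStep ι act a₂)
      (LinearMap.mulLeft ℚ (ι a₂)) (fun j => ι a₁ * S 1 (ι a₂ ^ j)), ← ih]
    · rw [hS_rec, one_smul, pow_succ',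
        act_S_mul_comm hcomm hassoc hact_one hact_rec hS_rec 1 a₁ a₂ (hmem q),
        letterStep_sub_mulLeft, add_comm]
    · intro j
      simpa [hstar_one_left] using hstep a₁ 1 j
    · intro i
      simp [hS_one, hstar_one_right, pow_succ', mul_assoc]
    · intro i j
      simpa [pow_succ', mul_assoc] using hstep a₂ (ι a₂ ^ i * ι a₁) j

end HarmonicAlgebra

theorem S_mul_pow_right_general
    {Z H : Type*} [AddCommGroup Z] [Module ℚ Z] [Ring H] [Algebra ℚ H]
    (ι : Z →ₗ[ℚ] H)
    (circ : Z →ₗ[ℚ] Z →ₗ[ℚ] Z)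
    (hcomm : ∀ a b : Z, circ a b = circ b a)
    (hassoc : ∀ a b c : Z, circ (circ a b) c = circ a (circ b c))
    (astar : H →ₗ[ℚ] H →ₗ[ℚ] H)
    (hstar_one_left : ∀ w : H, astar 1 w = w)
    (hstar_one_right : ∀ w : H, astar w 1 = w)
    (hstar_rec : ∀ (a b : Z) (w₁ w₂ : H),
      astar (ι a * w₁) (ι b * w₂) =
        ι a * astar w₁ (ι b * w₂) + ι b * astar (ι a * w₁) w₂ + ι (circ a b) * astar w₁ w₂)
    (act : Z →ₗ[ℚ] H →ₗ[ℚ] H)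
    (hact_one : ∀ a : Z, act a 1 = 0)
    (hact_rec : ∀ (a b : Z) (w : H), act a (ι b * w) = ι (circ a b) * w)
    (S : ℚ → H →ₗ[ℚ] H)
    (hS_one : ∀ r : ℚ, S r 1 = 1)
    (hS_rec : ∀ (r : ℚ) (a : Z) (w : H), S r (ι a * w) = ι a * S r w + r • act a (S r w))
    (a₁ a₂ : Z) (q : ℕ) :
    S 1 (ι a₁ * (ι a₂) ^ q) =
      ∑ i ∈ Finset.range (q + 1),
        (-1 : ℚ) ^ i • astar ((ι a₂) ^ i * ι a₁) (S 1 ((ι a₂) ^ (q - i))) := by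
  rw [S_one_mul_pow_eq_sum_antidiagonal hcomm hassoc hstar_one_left hstar_one_right hstar_rec
    hact_one hact_rec hS_one hS_rec, Finset.Nat.sum_antidiagonal_eq_sum_range_succ_mk]

theorem S_mul_pow_right
    {Z H : Type*} [AddCommGroup Z] [Module ℚ Z] [Ring H] [Algebra ℚ H]
    (ι : Z →ₗ[ℚ] H)
    (circ : Z →ₗ[ℚ] Z →ₗ[ℚ] Z)
    (hcomm : ∀ a b : Z, circ a b = circ b a)
    (hassoc : ∀ a b c : Z, circ (circ a b) c = circ a (circ b c))
    (astar : H →ₗ[ℚ] H →ₗ[ℚ] H)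
    (hstar_one_left : ∀ w : H, astar 1 w = w)
    (hstar_one_right : ∀ w : H, astar w 1 = w)
    (hstar_rec : ∀ (a b : Z) (w₁ w₂ : H),
      astar (ι a * w₁) (ι b * w₂) =
        ι a * astar w₁ (ι b * w₂) + ι b * astar (ι a * w₁) w₂ + ι (circ a b) * astar w₁ w₂)
    (act : Z →ₗ[ℚ] H →ₗ[ℚ] H)
    (hact_one : ∀ a : Z, act a 1 = 0)
    (hact_rec : ∀ (a b : Z) (w : H), act a (ι b * w) = ι (circ a b) * w)
    (S : ℚ → H →ₗ[ℚ] H)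
    (hS_one : ∀ r : ℚ, S r 1 = 1)
    (hS_rec : ∀ (r : ℚ) (a : Z) (w : H), S r (ι a * w) = ι a * S r w + r • act a (S r w))
    (a₁ a₂ : Z) (q : ℕ) (hq : 1 ≤ q) :
    S 1 (ι a₁ * (ι a₂) ^ q) =
      ∑ i ∈ Finset.range (q + 1),
        (-1 : ℚ) ^ i • astar ((ι a₂) ^ i * ι a₁) (S 1 ((ι a₂) ^ (q - i))) :=
  S_mul_pow_right_general ι circ hcomm hassoc astar hstar_one_left hstar_one_right hstar_rec act
    hact_one hact_rec S hS_one hS_rec a₁ a₂ q
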